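/- Let 1 < p < ∞, let X be a Banach space, and let T : L_p → X be a bounded ℓ₂-strictly singular linear operator. Then for every ε > 0 and every δ > 0 there exist N ∈ ℕ and real numbers b_1, …, b_N with max_{1 ≤ n ≤ N} |b_n| ≤ ε such that the function f = Σ_{n=1}^N b_n r_n satisfies ‖f‖_p = 1 and ‖Tf‖ < δ. -/

import Mathlib

open MeasureTheory Set Filter Topology
open scoped ENNReal NNReal

/-- Lebesgue measure on `[0,1]`. -/
noncomputable def μ01 : Measure ℝ := volume.restrict (Set.Icc 0 1)

/-- The Rademacher functions `r_n(t) = (-1)^⌊2^n t⌋`. -/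
noncomputable def rademacher (n : ℕ) (t : ℝ) : ℝ := (-1 : ℝ) ^ ⌊(2:ℝ) ^ n * t⌋

/-- `T` is `ℓ₂`-strictly singular: there is no closed subspace of `L_p` linearly
homeomorphic to `ℓ₂` on whose unit sphere `‖T ⬝‖` is bounded away from zero. -/
def IsL2StrictlySingular {X : Type*} [NormedAddCommGroup X] [NormedSpace ℝ X]
    {p : ℝ≥0∞} [Fact (1 ≤ p)] (T : Lp ℝ p μ01 →L[ℝ] X) : Prop :=
  ¬ ∃ Y : Submodule ℝ (Lp ℝ p μ01), IsClosed (Y : Set (Lp ℝ p μ01)) ∧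
      Nonempty (lp (fun _ : ℕ => ℝ) 2 ≃L[ℝ] Y) ∧
      ∃ c : ℝ, 0 < c ∧ ∀ y ∈ Y, ‖y‖ = 1 → c ≤ ‖T y‖

/-!
By Khintchine's inequality, `x ↦ ∑ xₙ r_{n+1}` embeds `ℓ²` isomorphically into `L_p`.
Precomposing with the isometry of `ℓ²` that spreads each coordinate evenly over a block of `K`
coordinates gives a copy of `ℓ²` in `L_p` whose unit vectors have all Rademacher coefficients at
most `10 / √K`. Strict singularity of `T` yields a unit vector `y` in
this copy with `‖T y‖ < δ`, and a normalized partial sum of the Rademacher expansion of `y` is the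
required `f`.

Khintchine's inequality is proved on the dyadic intervals of rank `N`, on which `r_1, …, r_N` are
constant and behave like independent random signs: exponential moments give
`∫ |f| ^ (2m) ≤ 4 (2m)! ‖b‖₂ ^ (2m)`, and Hölder's inequality between the first, second and
fourth moments, together with `‖f‖₂ = ‖b‖₂`, gives `∫ |f| ≥ ‖b‖₂ / 10`.
-/

open Finset
open scoped Nat

theorem Finset.sum_range_two_mul {M : Type*} [AddCommMonoid M] (f : ℕ → M) (n : ℕ) :
    ∑ k ∈ range (2 * n), f k = ∑ q ∈ range n, (f (2 * q) + f (2 * q + 1)) := by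
  induction n with
  | zero => simp
  | succ n ih => rw [mul_add_one, sum_range_succ, sum_range_succ, sum_range_succ, ih, add_assoc]

theorem Nat.two_mul_add_div_two_pow_succ {q r : ℕ} (hr : r < 2) (j : ℕ) :
    (2 * q + r) / 2 ^ (j + 1) = q / 2 ^ j := by
  rw [pow_succ', ← Nat.div_div_eq_div_mul, Nat.mul_add_div two_pos, Nat.div_eq_of_lt hr, add_zero]

/-- For `k < 2 ^ N`, `k / 2 ^ (N - (n + 1)) % 2` is the `n`-th binary digit of `k`, counted from
the most significant one. -/
theorem Finset.sum_range_two_pow_prod_digit {R : Type*} [CommSemiring R] (F : ℕ → ℕ → R) (N : ℕ) :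
    ∑ k ∈ range (2 ^ N), ∏ n ∈ range N, F n (k / 2 ^ (N - (n + 1)) % 2) =
      ∏ n ∈ range N, (F n 0 + F n 1) := by
  induction N with
  | zero => simp
  | succ N ih =>
    have peel : ∀ q r, r < 2 → ∏ n ∈ range (N + 1), F n ((2 * q + r) / 2 ^ (N + 1 - (n + 1)) % 2) =
        (∏ n ∈ range N, F n (q / 2 ^ (N - (n + 1)) % 2)) * F N r := by
      intro q r hr
      rw [prod_range_succ, Nat.sub_self, pow_zero, Nat.div_one, Nat.mul_add_mod,
        Nat.mod_eq_of_lt hr]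
      congr 1
      refine prod_congr rfl fun n hn => ?_
      rw [show N + 1 - (n + 1) = N - (n + 1) + 1 by have := mem_range.1 hn; omega,
        Nat.two_mul_add_div_two_pow_succ hr]
    rw [pow_succ', sum_range_two_mul, prod_range_succ, ← ih, sum_mul]
    refine sum_congr rfl fun q _ => ?_
    have h0 := peel q 0 two_pos
    rw [add_zero] at h0
    rw [h0, peel q 1 one_lt_two, mul_add]

theorem Finset.sum_Icc_one_eq_sum_range {M : Type*} [AddCommMonoid M] (N : ℕ) (f : ℕ → M) :
    ∑ n ∈ Icc 1 N, f n = ∑ n ∈ range N, f (n + 1) := by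
  rw [range_eq_Ico, sum_Ico_add' f 0 N 1]
  rfl

/-! ### Rademacher sums on dyadic intervals -/

/-- `dyadicSign N n k` is the value of `r_{n+1}` on the dyadic interval `[k / 2^N, (k+1) / 2^N)`. -/
noncomputable def dyadicSign (N n k : ℕ) : ℝ := (-1) ^ (k / 2 ^ (N - (n + 1)))

theorem sum_range_two_pow_prod_dyadicSign (G : ℕ → ℝ → ℝ) (N : ℕ) :
    ∑ k ∈ range (2 ^ N), ∏ n ∈ range N, G n (dyadicSign N n k) =
      ∏ n ∈ range N, (G n 1 + G n (-1)) := by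
  simpa [dyadicSign, ← neg_one_pow_eq_pow_mod_two] using
    sum_range_two_pow_prod_digit (fun n d => G n ((-1) ^ d)) N

theorem dyadicSign_mul_self (N n k : ℕ) : dyadicSign N n k * dyadicSign N n k = 1 := by
  simp [dyadicSign, ← mul_pow]

theorem sum_dyadicSign_mul_dyadicSign {N n n' : ℕ} (hn : n < N) (hn' : n' < N) :
    ∑ k ∈ range (2 ^ N), dyadicSign N n k * dyadicSign N n' k = if n = n' then 2 ^ N else 0 := by
  split_ifs with h
  · simp [h, dyadicSign_mul_self]
  · have key := sum_range_two_pow_prod_dyadicSign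
      (fun m s => (if m = n then s else 1) * (if m = n' then s else 1)) N
    simp only [prod_mul_distrib, prod_ite_eq', Finset.mem_range.2 hn, Finset.mem_range.2 hn',
      if_true] at key
    rw [key]
    exact prod_eq_zero (Finset.mem_range.2 hn) (by simp [h])

theorem sum_sq_sum_mul_dyadicSign (N : ℕ) (b : ℕ → ℝ) :
    ∑ k ∈ range (2 ^ N), (∑ n ∈ range N, b n * dyadicSign N n k) ^ 2 =
      2 ^ N * ∑ n ∈ range N, b n ^ 2 := by
  have expand : ∀ k, (∑ n ∈ range N, b n * dyadicSign N n k) ^ 2 =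
      ∑ n ∈ range N, ∑ n' ∈ range N, b n * b n' * (dyadicSign N n k * dyadicSign N n' k) :=
    fun k => by simp_rw [sq, sum_mul_sum, mul_mul_mul_comm]
  simp_rw [expand, sum_comm (s := range (2 ^ N)), ← mul_sum, mul_sum (range N) _ (2 ^ N : ℝ)]
  refine sum_congr rfl fun n hn => ?_
  rw [sum_congr rfl fun n' hn' => by
    rw [sum_dyadicSign_mul_dyadicSign (Finset.mem_range.1 hn) (Finset.mem_range.1 hn'), mul_ite,
      mul_zero], sum_ite_eq, if_pos hn]
  ring

theorem sum_exp_mul_sum_mul_dyadicSign_le (N : ℕ) (b : ℕ → ℝ) (t : ℝ) :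
    ∑ k ∈ range (2 ^ N), Real.exp (t * ∑ n ∈ range N, b n * dyadicSign N n k) ≤
      2 ^ N * Real.exp (t ^ 2 * (∑ n ∈ range N, b n ^ 2) / 2) := by
  have rhs : 2 ^ N * Real.exp (t ^ 2 * (∑ n ∈ range N, b n ^ 2) / 2) =
      ∏ n ∈ range N, 2 * Real.exp ((t * b n) ^ 2 / 2) := by
    rw [prod_mul_distrib, prod_const, card_range, ← Real.exp_sum, ← sum_div, mul_sum]
    simp only [mul_pow]
  simp_rw [rhs, mul_sum, ← mul_assoc, Real.exp_sum]
  rw [sum_range_two_pow_prod_dyadicSign (fun n s => Real.exp (t * b n * s))]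
  refine prod_le_prod (fun n _ => by positivity) fun n _ => ?_
  have := Real.cosh_le_exp_half_sq (t * b n)
  rw [Real.cosh_eq] at this
  simp only [mul_one, mul_neg]
  linarith

theorem Real.abs_pow_le_factorial_mul_exp_add_exp (x : ℝ) (n : ℕ) :
    |x| ^ n ≤ n ! * (Real.exp x + Real.exp (-x)) := by
  have h := Real.pow_div_factorial_le_exp |x| (abs_nonneg x) n
  rw [div_le_iff₀ (by positivity), mul_comm] at h
  refine h.trans (mul_le_mul_of_nonneg_left ?_ (by positivity))
  rcases abs_cases x with ⟨hx, -⟩ | ⟨hx, -⟩ <;> rw [hx] <;>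
    linarith [Real.exp_pos x, Real.exp_pos (-x)]

theorem Real.exp_half_lt_two : Real.exp (1 / 2) < 2 := by
  have h : Real.exp (1 / 2) * Real.exp (1 / 2) = Real.exp 1 := by rw [← Real.exp_add]; norm_num
  nlinarith [Real.exp_one_lt_d9, Real.exp_pos (1 / 2)]

theorem sum_abs_pow_sum_mul_dyadicSign_le (N : ℕ) (b : ℕ → ℝ) {m : ℕ} (hm : m ≠ 0) :
    ∑ k ∈ range (2 ^ N), |∑ n ∈ range N, b n * dyadicSign N n k| ^ (2 * m) ≤
      2 ^ N * (4 * (2 * m)!) * (∑ n ∈ range N, b n ^ 2) ^ m := by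
  set σ2 := ∑ n ∈ range N, b n ^ 2
  set f := fun k => ∑ n ∈ range N, b n * dyadicSign N n k
  have hσ0 : 0 ≤ σ2 := sum_nonneg fun n _ => sq_nonneg (b n)
  rcases hσ0.eq_or_lt with hσ | hσ
  · have hb : ∀ n ∈ range N, b n = 0 := fun n hn => pow_eq_zero_iff two_ne_zero |>.1 <|
      (sum_eq_zero_iff_of_nonneg fun n _ => sq_nonneg (b n)).1 hσ.symm n hn
    have hf : ∀ k, f k = 0 := fun k => sum_eq_zero fun n hn => by rw [hb n hn, zero_mul]
    simp only [f, hf, abs_zero, zero_pow (by omega : 2 * m ≠ 0), sum_const_zero]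
    positivity
  -- With `s = ‖b‖₂`, both exponential sums `∑ exp (± f / s)` are at most `2 ^ N * exp (1 / 2)`.
  set s := Real.sqrt σ2
  have hs : 0 < s := Real.sqrt_pos.2 hσ
  have hexp : ∀ t, t ^ 2 = σ2⁻¹ → ∑ k ∈ range (2 ^ N), Real.exp (t * f k) ≤ 2 ^ N * 2 := by
    intro t ht
    refine (sum_exp_mul_sum_mul_dyadicSign_le N b t).trans ?_
    rw [ht, inv_mul_cancel₀ hσ.ne']
    gcongr
    exact Real.exp_half_lt_two.le
  have hpt : ∀ k, |f k| ^ (2 * m) ≤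
      (2 * m)! * σ2 ^ m * (Real.exp (s⁻¹ * f k) + Real.exp (-s⁻¹ * f k)) := fun k => by
    calc |f k| ^ (2 * m) = s ^ (2 * m) * |s⁻¹ * f k| ^ (2 * m) := by
          rw [abs_mul, abs_inv, abs_of_pos hs, mul_pow, ← mul_assoc, ← mul_pow,
            mul_inv_cancel₀ hs.ne', one_pow, one_mul]
      _ ≤ s ^ (2 * m) * ((2 * m)! * (Real.exp (s⁻¹ * f k) + Real.exp (-(s⁻¹ * f k)))) := by
          gcongr
          exact Real.abs_pow_le_factorial_mul_exp_add_exp _ _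
      _ = _ := by rw [pow_mul, Real.sq_sqrt hσ0, neg_mul]; ring
  calc ∑ k ∈ range (2 ^ N), |f k| ^ (2 * m)
      ≤ (2 * m)! * σ2 ^ m * (∑ k ∈ range (2 ^ N), Real.exp (s⁻¹ * f k) +
          ∑ k ∈ range (2 ^ N), Real.exp (-s⁻¹ * f k)) := by
        rw [← sum_add_distrib, mul_sum]
        exact sum_le_sum fun k _ => hpt k
    _ ≤ (2 * m)! * σ2 ^ m * (2 ^ N * 2 + 2 ^ N * 2) := by
        gcongr
        · exact hexp _ (by rw [inv_pow, Real.sq_sqrt hσ0])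
        · exact hexp _ (by rw [neg_sq, inv_pow, Real.sq_sqrt hσ0])
    _ = 2 ^ N * (4 * (2 * m)!) * σ2 ^ m := by ring

theorem Finset.sum_sq_pow_three_le {ι : Type*} (s : Finset ι) (f : ι → ℝ) :
    (∑ i ∈ s, f i ^ 2) ^ 3 ≤ (∑ i ∈ s, |f i|) ^ 2 * ∑ i ∈ s, f i ^ 4 := by
  set A := ∑ i ∈ s, |f i|
  set B := ∑ i ∈ s, f i ^ 2
  set C := ∑ i ∈ s, |f i| ^ 3
  set D := ∑ i ∈ s, f i ^ 4
  have hBAC : B ^ 2 ≤ A * C := sum_sq_le_sum_mul_sum_of_sq_le_mul s (fun i _ => abs_nonneg _)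
    (fun i _ => by positivity) fun i _ => le_of_eq <| by rw [← sq_abs (f i)]; ring
  have hCBD : C ^ 2 ≤ B * D := sum_sq_le_sum_mul_sum_of_sq_le_mul s (fun i _ => sq_nonneg _)
    (fun i _ => by positivity) fun i _ => le_of_eq <| by
      rw [show f i ^ 4 = (f i ^ 2) ^ 2 by ring, ← sq_abs (f i)]; ring
  rcases (show 0 ≤ B from sum_nonneg fun i _ => sq_nonneg _).eq_or_lt with hB0 | hB0
  · rw [← hB0, zero_pow three_ne_zero]
    positivity
  · refine le_of_mul_le_mul_left ?_ hB0
    calc B * B ^ 3 = (B ^ 2) ^ 2 := by ring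
      _ ≤ (A * C) ^ 2 := pow_le_pow_left₀ (sq_nonneg B) hBAC 2
      _ = A ^ 2 * C ^ 2 := by ring
      _ ≤ A ^ 2 * (B * D) := mul_le_mul_of_nonneg_left hCBD (sq_nonneg A)
      _ = B * (A ^ 2 * D) := by ring

theorem sum_abs_sum_mul_dyadicSign_ge (N : ℕ) (b : ℕ → ℝ) :
    2 ^ N * Real.sqrt (∑ n ∈ range N, b n ^ 2) / 10 ≤
      ∑ k ∈ range (2 ^ N), |∑ n ∈ range N, b n * dyadicSign N n k| := by
  set σ2 := ∑ n ∈ range N, b n ^ 2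
  set A := ∑ k ∈ range (2 ^ N), |∑ n ∈ range N, b n * dyadicSign N n k|
  have hA : 0 ≤ A := sum_nonneg fun k _ => abs_nonneg _
  have hσ0 : 0 ≤ σ2 := sum_nonneg fun n _ => sq_nonneg (b n)
  rcases hσ0.eq_or_lt with hσ | hσ
  · rw [← hσ, Real.sqrt_zero, mul_zero, zero_div]; exact hA
  have holder := sum_sq_pow_three_le (range (2 ^ N)) fun k => ∑ n ∈ range N, b n * dyadicSign N n k
  have hD := sum_abs_pow_sum_mul_dyadicSign_le N b two_ne_zero
  rw [sum_sq_sum_mul_dyadicSign] at holder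
  simp only [Even.pow_abs ⟨2, rfl⟩] at hD
  have key : (2 ^ N) ^ 2 * σ2 ≤ 96 * A ^ 2 := by
    refine le_of_mul_le_mul_left (a := 2 ^ N * σ2 ^ 2) ?_ (by positivity)
    calc 2 ^ N * σ2 ^ 2 * ((2 ^ N) ^ 2 * σ2) = (2 ^ N * σ2) ^ 3 := by ring
      _ ≤ A ^ 2 * (2 ^ N * (4 * (2 * 2)!) * σ2 ^ 2) :=
        holder.trans (mul_le_mul_of_nonneg_left hD (sq_nonneg A))
      _ = 2 ^ N * σ2 ^ 2 * (96 * A ^ 2) := by norm_num [Nat.factorial]; ring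
  refine (pow_le_pow_iff_left₀ (by positivity) hA two_ne_zero).1 ?_
  rw [div_pow, mul_pow, Real.sq_sqrt hσ0]
  linarith [sq_nonneg A]

/-! ### Khintchine's inequality -/

instance : IsProbabilityMeasure μ01 := ⟨by simp [μ01, Real.volume_Icc]⟩

theorem measurable_rademacher (n : ℕ) : Measurable (rademacher n) :=
  (measurable_from_top (f := fun z : ℤ => (-1 : ℝ) ^ z)).comp
    (Int.measurable_floor.comp (measurable_const.mul measurable_id))

theorem abs_rademacher (n : ℕ) (t : ℝ) : |rademacher n t| = 1 := by
  simp [rademacher, abs_zpow]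

theorem rademacher_succ_eq_dyadicSign {N n : ℕ} (hn : n < N) {t : ℝ} (ht : 0 ≤ t) :
    rademacher (n + 1) t = dyadicSign N n ⌊2 ^ N * t⌋₊ := by
  have hscale : (2 : ℝ) ^ (n + 1) * t = 2 ^ N * t / ((2 ^ (N - (n + 1)) : ℕ) : ℝ) := by
    rw [Nat.cast_pow, Nat.cast_ofNat, mul_div_right_comm]
    congr 1
    rw [eq_div_iff (by positivity), ← pow_add, Nat.add_sub_cancel' (by omega)]
  rw [rademacher, dyadicSign, hscale, Int.floor_div_natCast,
    ← Int.natCast_floor_eq_floor (by positivity), ← Int.natCast_div, zpow_natCast]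

theorem integral_comp_floor_mul {M : ℕ} (hM : 0 < M) (H : ℕ → ℝ) :
    ∫ t, H ⌊M * t⌋₊ ∂μ01 = (M : ℝ)⁻¹ * ∑ k ∈ range M, H k := by
  have hM' : (0 : ℝ) < M := Nat.cast_pos.2 hM
  set I : ℕ → Set ℝ := fun k => Ico (k / M) ((k + 1) / M)
  have mem_I : ∀ {t : ℝ}, 0 ≤ t → ∀ k, t ∈ I k ↔ ⌊M * t⌋₊ = k := fun {t} ht k => by
    rw [Nat.floor_eq_iff (by positivity), Set.mem_Ico, div_le_iff₀ hM', lt_div_iff₀ hM',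
      mul_comm (M : ℝ) t]
  have step : ∀ᵐ t : ℝ ∂μ01, H ⌊M * t⌋₊ = ∑ k ∈ range M, (I k).indicator (fun _ => H k) t := by
    filter_upwards [ae_restrict_mem measurableSet_Icc,
      ae_restrict_of_ae (Measure.ae_ne volume 1)] with t ht ht1
    have hlt : ⌊M * t⌋₊ < M := (Nat.floor_lt (by nlinarith [ht.1])).2 <| by
      nlinarith [lt_of_le_of_ne ht.2 ht1]
    rw [sum_eq_single_of_mem _ (Finset.mem_range.2 hlt) fun k _ hk =>
      indicator_of_notMem (fun h => hk ((mem_I ht.1 k).1 h).symm) _,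
      indicator_of_mem ((mem_I ht.1 _).2 rfl)]
  have hvol : ∀ k ∈ range M, μ01.real (I k) = (M : ℝ)⁻¹ := fun k hk => by
    have hk : (k : ℝ) + 1 ≤ M := by exact_mod_cast Finset.mem_range.1 hk
    have hsub : I k ⊆ Icc 0 1 := Ico_subset_Icc_self.trans <|
      Icc_subset_Icc (by positivity) ((div_le_one hM').2 hk)
    rw [μ01, measureReal_restrict_apply measurableSet_Ico, inter_eq_left.2 hsub,
      Real.volume_real_Ico_of_le (by gcongr; linarith)]
    field_simp; ring
  rw [integral_congr_ae step, integral_finsetSum _ fun k _ =>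
    (integrable_const _).indicator measurableSet_Ico, mul_sum]
  refine sum_congr rfl fun k hk => ?_
  rw [integral_indicator_const _ measurableSet_Ico, hvol k hk, smul_eq_mul]

theorem integral_comp_sum_mul_rademacher (N : ℕ) (b : ℕ → ℝ) (G : ℝ → ℝ) :
    ∫ t, G (∑ n ∈ range N, b n * rademacher (n + 1) t) ∂μ01 =
      (2 ^ N)⁻¹ * ∑ k ∈ range (2 ^ N), G (∑ n ∈ range N, b n * dyadicSign N n k) := by
  have h := integral_comp_floor_mul (M := 2 ^ N) (by positivity)
    fun k => G (∑ n ∈ range N, b n * dyadicSign N n k)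
  push_cast at h
  rw [← h]
  refine integral_congr_ae ?_
  filter_upwards [ae_restrict_mem measurableSet_Icc] with t ht
  congr 1
  exact sum_congr rfl fun n hn => by rw [rademacher_succ_eq_dyadicSign (Finset.mem_range.1 hn) ht.1]

theorem memLp_rademacher (n : ℕ) (q : ℝ≥0∞) : MemLp (rademacher n) q μ01 :=
  MemLp.of_bound (measurable_rademacher n).aestronglyMeasurable 1 <|
    Eventually.of_forall fun t => by rw [Real.norm_eq_abs, abs_rademacher]

theorem memLp_sum_mul_rademacher (N : ℕ) (b : ℕ → ℝ) (q : ℝ≥0∞) :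
    MemLp (fun t => ∑ n ∈ range N, b n * rademacher (n + 1) t) q μ01 :=
  memLp_finsetSum _ fun n _ => (memLp_rademacher (n + 1) q).const_mul (b n)

theorem integral_abs_pow_sum_mul_rademacher_le (N : ℕ) (b : ℕ → ℝ) {m : ℕ} (hm : m ≠ 0) :
    ∫ t, |∑ n ∈ range N, b n * rademacher (n + 1) t| ^ (2 * m) ∂μ01 ≤
      4 * (2 * m)! * (∑ n ∈ range N, b n ^ 2) ^ m := by
  rw [integral_comp_sum_mul_rademacher N b fun x => |x| ^ (2 * m), inv_mul_le_iff₀ (by positivity),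
    ← mul_assoc]
  exact sum_abs_pow_sum_mul_dyadicSign_le N b hm

theorem integral_abs_sum_mul_rademacher_ge (N : ℕ) (b : ℕ → ℝ) :
    Real.sqrt (∑ n ∈ range N, b n ^ 2) / 10 ≤
      ∫ t, |∑ n ∈ range N, b n * rademacher (n + 1) t| ∂μ01 := by
  rw [integral_comp_sum_mul_rademacher N b fun x => |x|, le_inv_mul_iff₀ (by positivity),
    ← mul_div_assoc]
  exact sum_abs_sum_mul_dyadicSign_ge N b

theorem MeasureTheory.lpNorm_le_lpNorm_of_exponent_le {α E : Type*} [MeasurableSpace α]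
    {μ : Measure α} [IsProbabilityMeasure μ] [NormedAddCommGroup E] {f : α → E} {p q : ℝ≥0∞}
    (hpq : p ≤ q) (hf : MemLp f q μ) : lpNorm f p μ ≤ lpNorm f q μ := by
  rw [← toReal_eLpNorm hf.1, ← toReal_eLpNorm hf.1]
  exact ENNReal.toReal_mono hf.eLpNorm_ne_top (eLpNorm_le_eLpNorm_of_exponent_le hpq hf.1)

theorem lpNorm_sum_mul_rademacher_ge {p : ℝ≥0∞} (hp : 1 ≤ p) (N : ℕ) (b : ℕ → ℝ) :
    Real.sqrt (∑ n ∈ range N, b n ^ 2) / 10 ≤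
      lpNorm (fun t => ∑ n ∈ range N, b n * rademacher (n + 1) t) p μ01 := by
  refine (integral_abs_sum_mul_rademacher_ge N b).trans ?_
  have h1 := lpNorm_one_eq_integral_norm (memLp_sum_mul_rademacher N b 1).1
  simp only [Real.norm_eq_abs] at h1
  rw [← h1]
  exact lpNorm_le_lpNorm_of_exponent_le hp (memLp_sum_mul_rademacher N b p)

theorem exists_lpNorm_sum_mul_rademacher_le {p : ℝ≥0∞} (hp : p ≠ ∞) :
    ∃ C > 0, ∀ (N : ℕ) (b : ℕ → ℝ),
      lpNorm (fun t => ∑ n ∈ range N, b n * rademacher (n + 1) t) p μ01 ≤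
        C * Real.sqrt (∑ n ∈ range N, b n ^ 2) := by
  set m := ⌈p.toReal⌉₊ + 1 with hm_def
  have hm : (2 * m : ℕ) ≠ 0 := by positivity
  have hpm : p ≤ (2 * m : ℕ) := by
    rw [← ENNReal.ofReal_toReal hp, ← ENNReal.ofReal_natCast]
    exact ENNReal.ofReal_le_ofReal <|
      (Nat.le_ceil _).trans (Nat.cast_le.2 (by omega : ⌈p.toReal⌉₊ ≤ 2 * m))
  refine ⟨(4 * (2 * m)! : ℝ) ^ ((2 * m : ℕ) : ℝ)⁻¹, by positivity, fun N b => ?_⟩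
  set f := fun t => ∑ n ∈ range N, b n * rademacher (n + 1) t
  have hσ : 0 ≤ ∑ n ∈ range N, b n ^ 2 := sum_nonneg fun n _ => sq_nonneg _
  refine (lpNorm_le_lpNorm_of_exponent_le hpm (memLp_sum_mul_rademacher N b _)).trans ?_
  rw [lpNorm_eq_integral_norm_rpow_toReal (by exact_mod_cast hm) (ENNReal.natCast_ne_top _)
    (memLp_sum_mul_rademacher N b 1).1, ENNReal.toReal_natCast]
  simp only [Real.norm_eq_abs, Real.rpow_natCast]
  calc (∫ t, |f t| ^ (2 * m) ∂μ01) ^ ((2 * m : ℕ) : ℝ)⁻¹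
      ≤ (4 * (2 * m)! * Real.sqrt (∑ n ∈ range N, b n ^ 2) ^ (2 * m)) ^ ((2 * m : ℕ) : ℝ)⁻¹ := by
        rw [pow_mul, Real.sq_sqrt hσ]
        exact Real.rpow_le_rpow (integral_nonneg fun t => by positivity)
          (integral_abs_pow_sum_mul_rademacher_le N b (by omega)) (by positivity)
    _ = _ := by rw [Real.mul_rpow (by positivity) (by positivity),
        Real.pow_rpow_inv_natCast (Real.sqrt_nonneg _) hm]

section RademacherLp

variable (p : ℝ≥0∞)

noncomputable def rademacherLp (n : ℕ) : Lp ℝ p μ01 := (memLp_rademacher n p).toLp (rademacher n)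

theorem coeFn_sum_smul_rademacherLp (N : ℕ) (b : ℕ → ℝ) :
    ⇑(∑ n ∈ range N, b n • rademacherLp p (n + 1)) =ᵐ[μ01]
      fun t => ∑ n ∈ range N, b n * rademacher (n + 1) t := by
  have h : ∀ n ∈ range N, ⇑(b n • rademacherLp p (n + 1)) =ᵐ[μ01]
      fun t => b n * rademacher (n + 1) t := fun n _ =>
    (Lp.coeFn_smul _ _).trans <| (memLp_rademacher (n + 1) p).coeFn_toLp.mono fun t ht => by
      simp [rademacherLp, ht]
  filter_upwards [Lp.coeFn_fun_finsetSum (range N) fun n => b n • rademacherLp p (n + 1),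
    (eventually_all_finset _).2 h] with t h1 h2
  rw [h1]
  exact sum_congr rfl h2

theorem coeFn_smul_sum_smul_rademacherLp (a : ℝ) (N : ℕ) (c : ℕ → ℝ) :
    ⇑(a • ∑ n ∈ range N, c n • rademacherLp p (n + 1)) =ᵐ[μ01]
      fun t => ∑ n ∈ Icc 1 N, a * c (n - 1) * rademacher n t := by
  simp_rw [smul_sum, smul_smul]
  filter_upwards [coeFn_sum_smul_rademacherLp p N fun n => a * c n] with t ht
  rw [ht, sum_Icc_one_eq_sum_range]
  simp only [Nat.add_sub_cancel]

theorem norm_sum_smul_rademacherLp (N : ℕ) (b : ℕ → ℝ) :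
    ‖∑ n ∈ range N, b n • rademacherLp p (n + 1)‖ =
      lpNorm (fun t => ∑ n ∈ range N, b n * rademacher (n + 1) t) p μ01 := by
  rw [Lp.norm_def, eLpNorm_congr_ae (coeFn_sum_smul_rademacherLp p N b),
    toReal_eLpNorm (memLp_sum_mul_rademacher N b p).1]

theorem norm_sum_smul_rademacherLp_ge [Fact (1 ≤ p)] (N : ℕ) (b : ℕ → ℝ) :
    Real.sqrt (∑ n ∈ range N, b n ^ 2) / 10 ≤ ‖∑ n ∈ range N, b n • rademacherLp p (n + 1)‖ := by
  rw [norm_sum_smul_rademacherLp]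
  exact lpNorm_sum_mul_rademacher_ge Fact.out N b

theorem exists_norm_finset_sum_smul_rademacherLp_le (hp : p ≠ ∞) :
    ∃ C > 0, ∀ (s : Finset ℕ) (b : ℕ → ℝ),
      ‖∑ n ∈ s, b n • rademacherLp p (n + 1)‖ ≤ C * Real.sqrt (∑ n ∈ s, b n ^ 2) := by
  obtain ⟨C, hC, hbound⟩ := exists_lpNorm_sum_mul_rademacher_le hp
  refine ⟨C, hC, fun s b => ?_⟩
  -- Extend `b` by zero outside `s`, so that the sums over `s` become sums over a `range`.
  obtain ⟨N, hsN⟩ := s.exists_nat_subset_range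
  have h := hbound N fun n => if n ∈ s then b n else 0
  simp only [ite_pow, ne_eq, OfNat.ofNat_ne_zero, not_false_eq_true, zero_pow, sum_ite_mem,
    Finset.inter_eq_right.2 hsN] at h
  rw [← norm_sum_smul_rademacherLp] at h
  simpa only [ite_smul, zero_smul, sum_ite_mem, Finset.inter_eq_right.2 hsN] using h

end RademacherLp

/-! ### A copy of `ℓ²` spanned by blocks of Rademacher functions -/

local notation "ℓ²" => lp (fun _ : ℕ => ℝ) 2

theorem Real.rpow_toReal_two (a : ℝ) : a ^ (2 : ℝ≥0∞).toReal = a ^ 2 := by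
  rw [show (2 : ℝ≥0∞).toReal = ((2 : ℕ) : ℝ) by norm_num, Real.rpow_natCast]

theorem lp.hasSum_sq (x : ℓ²) : HasSum (fun n => x n ^ 2) (‖x‖ ^ 2) := by
  simpa only [Real.rpow_toReal_two, Real.norm_eq_abs, sq_abs] using lp.hasSum_norm (by norm_num) x

theorem memℓp_two_of_summable_sq {f : ℕ → ℝ} (hf : Summable fun n => f n ^ 2) : Memℓp f 2 :=
  memℓp_gen <| by simpa only [Real.rpow_toReal_two, Real.norm_eq_abs, sq_abs] using hf

section BlockSpread

variable (K : ℕ) [NeZero K]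

theorem hasSum_sq_comp_div_div_sqrt (x : ℓ²) :
    HasSum (fun n => (x (n / K) / Real.sqrt K) ^ 2) (‖x‖ ^ 2) := by
  have hK : (K : ℝ) ≠ 0 := NeZero.ne _
  have hconst : HasSum (fun _ : Fin K => (K : ℝ)⁻¹) 1 := by
    simpa [hK] using hasSum_fintype fun _ : Fin K => (K : ℝ)⁻¹
  have hsq : Summable fun n => ‖x n ^ 2‖ := by
    simpa only [Real.norm_eq_abs, abs_pow, sq_abs] using (lp.hasSum_sq x).summable
  have h := (lp.hasSum_sq x).mul hconst
    (summable_mul_of_summable_norm hsq hconst.summable.norm)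
  rw [mul_one, ← (Nat.divModEquiv K).hasSum_iff] at h
  convert h using 1
  · rfl
  · ext n
    rw [Function.comp_apply, Nat.divModEquiv_apply, div_pow, Real.sq_sqrt (Nat.cast_nonneg K),
      div_eq_mul_inv]

noncomputable def blockSpread : ℓ² →ₗᵢ[ℝ] ℓ² where
  toFun x := ⟨fun n => x (n / K) / Real.sqrt K,
    memℓp_two_of_summable_sq (hasSum_sq_comp_div_div_sqrt K x).summable⟩
  map_add' x y := by ext n; exact add_div _ _ _
  map_smul' c x := by ext n; simp [mul_div_assoc]
  norm_map' x := by
    refine (pow_left_inj₀ (norm_nonneg _) (norm_nonneg x) two_ne_zero).1 ?_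
    exact (lp.hasSum_sq _).unique (hasSum_sq_comp_div_div_sqrt K x)

theorem blockSpread_apply (x : ℓ²) (n : ℕ) : blockSpread K x n = x (n / K) / Real.sqrt K := rfl

theorem abs_blockSpread_apply_le (x : ℓ²) (n : ℕ) :
    |blockSpread K x n| ≤ ‖x‖ / Real.sqrt K := by
  rw [blockSpread_apply, abs_div, abs_of_nonneg (Real.sqrt_nonneg _)]
  gcongr
  exact lp.norm_apply_le_norm two_ne_zero x _

end BlockSpread

section Embedding

variable (p : ℝ≥0∞) [Fact (1 ≤ p)]

theorem summable_smul_rademacherLp (hp : p ≠ ∞) (x : ℓ²) :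
    Summable fun n => x n • rademacherLp p (n + 1) := by
  obtain ⟨C, hC, hbound⟩ := exists_norm_finset_sum_smul_rademacherLp_le p hp
  refine summable_iff_vanishing_norm.2 fun ε hε => ?_
  obtain ⟨s, hs⟩ := summable_iff_vanishing_norm.1 (lp.hasSum_sq x).summable ((ε / C) ^ 2)
    (by positivity)
  refine ⟨s, fun t ht => (hbound t x).trans_lt ?_⟩
  have h := hs t ht
  rw [Real.norm_of_nonneg (sum_nonneg fun n _ => sq_nonneg _)] at h
  calc C * Real.sqrt (∑ n ∈ t, x n ^ 2) < C * (ε / C) :=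
        mul_lt_mul_of_pos_left ((Real.sqrt_lt' (by positivity)).2 h) hC
    _ = ε := by field_simp

theorem exists_norm_tsum_smul_rademacherLp_le (hp : p ≠ ∞) :
    ∃ C, ∀ x : ℓ², ‖∑' n, x n • rademacherLp p (n + 1)‖ ≤ C * ‖x‖ := by
  obtain ⟨C, hC, hbound⟩ := exists_norm_finset_sum_smul_rademacherLp_le p hp
  refine ⟨C, fun x => le_of_tendsto' (summable_smul_rademacherLp p hp x).hasSum.norm fun s => ?_⟩
  calc ‖∑ n ∈ s, x n • rademacherLp p (n + 1)‖ ≤ C * Real.sqrt (∑ n ∈ s, x n ^ 2) := hbound s x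
    _ ≤ C * Real.sqrt (‖x‖ ^ 2) := by
      gcongr
      exact sum_le_hasSum s (fun _ _ => sq_nonneg _) (lp.hasSum_sq x)
    _ = C * ‖x‖ := by rw [Real.sqrt_sq (norm_nonneg x)]

noncomputable def rademacherEmbedding (hp : p ≠ ∞) : ℓ² →L[ℝ] Lp ℝ p μ01 :=
  LinearMap.mkContinuousOfExistsBound
    { toFun := fun x => ∑' n, x n • rademacherLp p (n + 1)
      map_add' := fun x y => by
        simp only [lp.coeFn_add, Pi.add_apply, add_smul]
        exact (summable_smul_rademacherLp p hp x).tsum_add (summable_smul_rademacherLp p hp y)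
      map_smul' := fun c x => by
        simp only [lp.coeFn_smul, Pi.smul_apply, smul_eq_mul, mul_smul, RingHom.id_apply]
        exact (summable_smul_rademacherLp p hp x).tsum_const_smul c }
    (exists_norm_tsum_smul_rademacherLp_le p hp)

theorem hasSum_rademacherEmbedding (hp : p ≠ ∞) (x : ℓ²) :
    HasSum (fun n => x n • rademacherLp p (n + 1)) (rademacherEmbedding p hp x) :=
  (summable_smul_rademacherLp p hp x).hasSum

theorem antilipschitz_rademacherEmbedding (hp : p ≠ ∞) :
    AntilipschitzWith 10 (rademacherEmbedding p hp) :=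
  ContinuousLinearMap.antilipschitz_of_bound _ fun x => by
    have h := le_of_tendsto_of_tendsto'
      (((lp.hasSum_sq x).tendsto_sum_nat.sqrt).div_const 10)
      (hasSum_rademacherEmbedding p hp x).tendsto_sum_nat.norm
      fun N => norm_sum_smul_rademacherLp_ge p N x
    rw [Real.sqrt_sq (norm_nonneg x)] at h
    push_cast
    linarith

end Embedding

theorem IsL2StrictlySingular.exists_norm_apply_lt {X : Type*} [NormedAddCommGroup X]
    [NormedSpace ℝ X] {p : ℝ≥0∞} [Fact (1 ≤ p)] {T : Lp ℝ p μ01 →L[ℝ] X}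
    (hT : IsL2StrictlySingular T) {J : ℓ² →L[ℝ] Lp ℝ p μ01} {k : ℝ≥0} (hJ : AntilipschitzWith k J)
    {δ : ℝ} (hδ : 0 < δ) : ∃ x, ‖J x‖ = 1 ∧ ‖T (J x)‖ < δ := by
  have hclosed : IsClosed (Set.range J) := hJ.isClosed_range J.uniformContinuous
  by_contra! h
  refine hT ⟨(J : ℓ² →ₗ[ℝ] Lp ℝ p μ01).range, by rwa [LinearMap.coe_range],
    ⟨J.equivRange hJ.injective hclosed⟩, δ, hδ, ?_⟩
  rintro _ ⟨x, rfl⟩ hx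
  exact h x hx

theorem HasSum.eventually_norm_apply_sum_range_lt {E F : Type*} [NormedAddCommGroup E]
    [NormedAddCommGroup F] {u : ℕ → E} {y : E} (hu : HasSum u y) (hy : ‖y‖ = 1) {T : E → F}
    (hT : Continuous T) {δ : ℝ} (hTy : ‖T y‖ < δ) :
    ∀ᶠ N in atTop, 1 / 2 < ‖∑ n ∈ range N, u n‖ ∧
      ‖T (∑ n ∈ range N, u n)‖ < δ * ‖∑ n ∈ range N, u n‖ := by
  have hs := hu.tendsto_sum_nat
  have h1 := hs.norm.eventually (lt_mem_nhds (by rw [hy]; norm_num : (1 / 2 : ℝ) < ‖y‖))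
  have h2 := (((hT.tendsto y).comp hs).norm.sub (hs.norm.const_mul δ)).eventually
    (gt_mem_nhds (by rw [hy, mul_one]; linarith : ‖T y‖ - δ * ‖y‖ < 0))
  filter_upwards [h1, h2] with N hN1 hN2
  exact ⟨hN1, by simpa using hN2⟩

theorem IsL2StrictlySingular.exists_norm_rademacherEmbedding_blockSpread_lt {X : Type*}
    [NormedAddCommGroup X] [NormedSpace ℝ X] {p : ℝ≥0∞} [Fact (1 ≤ p)] {T : Lp ℝ p μ01 →L[ℝ] X}
    (hT : IsL2StrictlySingular T) (hp : p ≠ ∞) (K : ℕ) [NeZero K] {δ : ℝ} (hδ : 0 < δ) :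
    ∃ x : ℓ², ‖x‖ ≤ 10 ∧ ‖rademacherEmbedding p hp (blockSpread K x)‖ = 1 ∧
      ‖T (rademacherEmbedding p hp (blockSpread K x))‖ < δ := by
  set R := rademacherEmbedding p hp
  set J := R.comp (blockSpread K).toContinuousLinearMap
  have hJ : AntilipschitzWith 10 J := J.antilipschitz_of_bound fun x => by
    rw [← (blockSpread K).norm_map x]
    exact R.bound_of_antilipschitz (antilipschitz_rademacherEmbedding p hp) _
  obtain ⟨x, hx1, hTx⟩ := hT.exists_norm_apply_lt hJ hδ
  exact ⟨x, by simpa [hx1] using J.bound_of_antilipschitz hJ x, hx1, hTx⟩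

theorem exists_div_sqrt_natCast_succ_le (c : ℝ) {ε : ℝ} (hε : 0 < ε) :
    ∃ K : ℕ, c / Real.sqrt ((K + 1 : ℕ) : ℝ) ≤ ε := by
  obtain ⟨K, hK⟩ := exists_nat_gt ((c / ε) ^ 2)
  refine ⟨K, (div_le_iff₀ (Real.sqrt_pos.2 (by positivity))).2 ?_⟩
  have h : c / ε ≤ Real.sqrt ((K + 1 : ℕ) : ℝ) := (le_abs_self _).trans <| by
    rw [← Real.sqrt_sq_eq_abs]
    exact Real.sqrt_le_sqrt (by push_cast; linarith)
  rwa [div_le_iff₀ hε, mul_comm] at h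

theorem l2_strictly_singular_small_rademacher_combination_general
    {X : Type*} [NormedAddCommGroup X] [NormedSpace ℝ X]
    (p : ℝ≥0∞) [Fact (1 ≤ p)] (hp2 : p ≠ ∞)
    (T : Lp ℝ p μ01 →L[ℝ] X) (hT : IsL2StrictlySingular T)
    (ε δ : ℝ) (hε : 0 < ε) (hδ : 0 < δ) :
    ∃ (N : ℕ) (b : ℕ → ℝ),
      (∀ n ∈ Finset.Icc 1 N, |b n| ≤ ε) ∧
      ∃ f : Lp ℝ p μ01,
        (⇑f =ᵐ[μ01] fun t => ∑ n ∈ Finset.Icc 1 N, b n * rademacher n t) ∧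
        ‖f‖ = 1 ∧ ‖T f‖ < δ := by
  obtain ⟨K, hK⟩ := exists_div_sqrt_natCast_succ_le 20 hε
  set B := blockSpread (K + 1)
  obtain ⟨x, hx, hx1, hTx⟩ :=
    hT.exists_norm_rademacherEmbedding_blockSpread_lt hp2 (K + 1) hδ
  obtain ⟨N, hN1, hNT⟩ := (HasSum.eventually_norm_apply_sum_range_lt
    (hasSum_rademacherEmbedding p hp2 (B x)) hx1 T.continuous hTx).exists
  set s := ∑ n ∈ range N, B x n • rademacherLp p (n + 1)
  have hs : 0 < ‖s‖ := by linarith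
  refine ⟨N, fun n => ‖s‖⁻¹ * B x (n - 1), fun n _ => ?_, ‖s‖⁻¹ • s,
    coeFn_smul_sum_smul_rademacherLp p _ N (B x), norm_smul_inv_norm (norm_pos_iff.1 hs), ?_⟩
  · calc |‖s‖⁻¹ * B x (n - 1)| = ‖s‖⁻¹ * |B x (n - 1)| := by rw [abs_mul, abs_inv, abs_norm]
      _ ≤ 2 * (10 / Real.sqrt ((K + 1 : ℕ) : ℝ)) := by
        gcongr
        · exact ((inv_lt_comm₀ hs two_pos).2 (by linarith)).le
        · exact (abs_blockSpread_apply_le _ x _).trans (by gcongr)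
      _ = 20 / Real.sqrt ((K + 1 : ℕ) : ℝ) := by ring
      _ ≤ ε := hK
  · rw [map_smul, norm_smul, norm_inv, norm_norm, inv_mul_lt_iff₀ hs, mul_comm]
    exact hNT

/-- If `1 < p < ∞`, `X` is a Banach space and `T : L_p[0,1] → X` is a bounded
`ℓ₂`-strictly singular operator, then for all `ε, δ > 0` there are `N` and reals
`b_1, …, b_N` with `max |b_n| ≤ ε` such that `f = ∑_{n=1}^N b_n r_n` satisfies
`‖f‖_p = 1` and `‖T f‖ < δ`. -/
theorem l2_strictly_singular_small_rademacher_combination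
    {X : Type*} [NormedAddCommGroup X] [NormedSpace ℝ X] [CompleteSpace X]
    (p : ℝ≥0∞) [Fact (1 ≤ p)] (hp1 : 1 < p) (hp2 : p ≠ ∞)
    (T : Lp ℝ p μ01 →L[ℝ] X) (hT : IsL2StrictlySingular T)
    (ε δ : ℝ) (hε : 0 < ε) (hδ : 0 < δ) :
    ∃ (N : ℕ) (b : ℕ → ℝ),
      (∀ n ∈ Finset.Icc 1 N, |b n| ≤ ε) ∧
      ∃ f : Lp ℝ p μ01,
        (⇑f =ᵐ[μ01] fun t => ∑ n ∈ Finset.Icc 1 N, b n * rademacher n t) ∧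
        ‖f‖ = 1 ∧ ‖T f‖ < δ :=
  l2_strictly_singular_small_rademacher_combination_general p hp2 T hT ε δ hε hδ
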